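/- With c_1 = 1 and notation as in the minor criterion, for every k ≥ 1 one has w Q^{-1} (B Q^{-1})^k v = (t(y) P_{n-2}) X^{k-1} y, where y = (-m_2, m_3, ..., (-1)^{n-2} m_{n-1})^T, P_{n-2} is the (n-2)×(n-2) anti-diagonal unit matrix, and X is Q^{-1} with first row and last column deleted. Moreover w Q^{-1} v = c_{n+1} is equivalent to m_n = 0. -/

import Mathlib

/-!
Since `c 1 = 1`, `Q` is unitriangular, so `Q⁻¹` is its adjugate. The cofactor of `Q` at `(0, i)`
is block triangular with diagonal blocks `M0 i` and a unitriangular matrix, so the first column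
of `Q⁻¹` is `((-1)^i m_i)_i`. Reading `Q * Q⁻¹ = 1` along its first column one row down gives
`Q⁻¹ v = u := ((-1)^i m_(i+1))_i`, and along the last row of the next larger `Q` it gives
`w ⬝ u = c (n+1) + (-1)^n m_n`.

For the powers: `Q` is persymmetric (`P Q P = Qᵀ`) and `w = v ∘ rev`, hence `w Q⁻¹ = u ∘ rev`.
Moreover `Q⁻¹ (B Q⁻¹)^k = (Q⁻¹ B)^k Q⁻¹`, and `Q⁻¹ B` drops the first entry of a vector and then
multiplies by the matrix `F` obtained from `Q⁻¹` by deleting its last column; deleting also the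
first row of `F` gives `X`. As the tail of `u` is `y`, this yields `(Q⁻¹ B)^k u = F X^(k-1) y`.
-/

open Matrix

noncomputable def M0 (c : ℕ → ℂ) (n : ℕ) : Matrix (Fin n) (Fin n) ℂ :=
  fun i j => if (j : ℕ) ≤ (i : ℕ) + 1 then c ((i : ℕ) + 2 - (j : ℕ)) else 0

noncomputable def pm (c : ℕ → ℂ) (r : ℕ) : ℂ := (M0 c r).det

noncomputable def Qmat (c : ℕ → ℂ) (s : ℕ) : Matrix (Fin s) (Fin s) ℂ :=
  fun i j => if (j : ℕ) ≤ (i : ℕ) then c ((i : ℕ) + 1 - (j : ℕ)) else 0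
/-- The (n-1)×(n-1) upper shift matrix `B`. -/
noncomputable def Bmat (s : ℕ) : Matrix (Fin s) (Fin s) ℂ :=
  fun i j => if (j : ℕ) = (i : ℕ) + 1 then 1 else 0

/-- The s×s anti-diagonal unit matrix `P`. -/
noncomputable def Pmat (s : ℕ) : Matrix (Fin s) (Fin s) ℂ :=
  fun i j => if (i : ℕ) + (j : ℕ) = s - 1 then 1 else 0

/-- The vector `y = (-m 2, m 3, ..., (-1)^(n-2) m (n-1))`. -/
noncomputable def yvec (c : ℕ → ℂ) (n : ℕ) : Fin (n - 2) → ℂ :=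
  fun k => (-1 : ℂ) ^ ((k : ℕ) + 1) * pm c ((k : ℕ) + 2)

section Reversal

variable {s : ℕ}

lemma Pmat_eq_toMatrix_revPerm (s : ℕ) :
    Pmat s = (Fin.revPerm : Equiv.Perm (Fin s)).toPEquiv.toMatrix := by
  ext i j
  have := i.isLt
  simp only [Pmat, PEquiv.toMatrix_apply, Equiv.toPEquiv_apply, Option.mem_def,
    Option.some_inj, Fin.revPerm_apply, Fin.ext_iff, Fin.val_rev]
  congr 1
  exact propext (by omega)

lemma Pmat_mul (A : Matrix (Fin s) (Fin s) ℂ) : Pmat s * A = A.submatrix Fin.rev id := by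
  rw [Pmat_eq_toMatrix_revPerm, PEquiv.toMatrix_toPEquiv_mul]; rfl

lemma mul_Pmat (A : Matrix (Fin s) (Fin s) ℂ) : A * Pmat s = A.submatrix id Fin.rev := by
  rw [Pmat_eq_toMatrix_revPerm, PEquiv.mul_toMatrix_toPEquiv]; rfl

lemma vecMul_Pmat (z : Fin s → ℂ) : z ᵥ* Pmat s = z ∘ Fin.rev := by
  rw [Pmat_eq_toMatrix_revPerm, PEquiv.vecMul_toMatrix_toPEquiv]; rfl

lemma Pmat_mul_Pmat (s : ℕ) : Pmat s * Pmat s = 1 := by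
  ext i j
  have := i.isLt
  simp only [Pmat_mul, submatrix_apply, id, Pmat, one_apply, Fin.ext_iff, Fin.val_rev]
  congr 1
  exact propext (by omega)

lemma Pmat_mul_Qmat_mul_Pmat (c : ℕ → ℂ) (s : ℕ) :
    Pmat s * Qmat c s * Pmat s = (Qmat c s)ᵀ := by
  ext i j
  have := i.isLt; have := j.isLt
  simp only [Pmat_mul, mul_Pmat, submatrix_apply, id, transpose_apply, Qmat, Fin.val_rev]
  split_ifs <;> first | rfl | omega | (congr 1; omega)

lemma comp_rev_vecMul_inv_Qmat (c : ℕ → ℂ) (v : Fin s → ℂ) :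
    (v ∘ Fin.rev) ᵥ* (Qmat c s)⁻¹ = ((Qmat c s)⁻¹ *ᵥ v) ∘ Fin.rev := by
  have hP : (Pmat s)⁻¹ = Pmat s := inv_eq_left_inv (Pmat_mul_Pmat s)
  have hT : ((Qmat c s)⁻¹)ᵀ = Pmat s * (Qmat c s)⁻¹ * Pmat s := by
    rw [transpose_nonsing_inv, ← Pmat_mul_Qmat_mul_Pmat, Matrix.mul_inv_rev, Matrix.mul_inv_rev,
      hP, Matrix.mul_assoc]
  rw [← vecMul_Pmat, ← vecMul_Pmat, vecMul_vecMul, ← vecMul_transpose, hT, vecMul_vecMul,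
    Matrix.mul_assoc, Matrix.mul_assoc, Pmat_mul_Pmat, Matrix.mul_one]

lemma init_comp_rev {t : ℕ} (z : Fin (t + 1) → ℂ) :
    Fin.init (z ∘ Fin.rev) = Fin.tail z ∘ Fin.rev := by
  ext j
  simp [Fin.init, Fin.tail, Fin.rev_castSucc]

end Reversal

section Shift

variable {t : ℕ}

lemma Bmat_mulVec (z : Fin (t + 1) → ℂ) : Bmat (t + 1) *ᵥ z = Fin.snoc (Fin.tail z) 0 := by
  ext i
  induction i using Fin.lastCases with
  | last =>
    simp only [Fin.snoc_last, mulVec, dotProduct]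
    refine Finset.sum_eq_zero fun j _ => ?_
    rw [Bmat, if_neg (by simp; omega), zero_mul]
  | cast i =>
    simp only [Fin.snoc_castSucc, Fin.tail]
    rw [mulVec, dotProduct, Finset.sum_eq_single i.succ]
    · rw [Bmat, if_pos (by simp), one_mul]
    · intro j _ hj
      rw [Bmat, if_neg (fun h => hj (Fin.ext (by simpa using h))), zero_mul]
    · simp

lemma mulVec_snoc_zero {m : Type*} (A : Matrix m (Fin (t + 1)) ℂ) (x : Fin t → ℂ) :
    A *ᵥ Fin.snoc x 0 = A.submatrix id Fin.castSucc *ᵥ x := by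
  ext i
  simp [mulVec, dotProduct, Fin.sum_univ_castSucc]

lemma mul_Bmat_pow_succ_mulVec (R : Matrix (Fin (t + 1)) (Fin (t + 1)) ℂ)
    (z : Fin (t + 1) → ℂ) (k : ℕ) :
    (R * Bmat (t + 1)) ^ (k + 1) *ᵥ z
      = R.submatrix id Fin.castSucc *ᵥ
          (R.submatrix Fin.succ Fin.castSucc ^ k *ᵥ Fin.tail z) := by
  induction k with
  | zero => rw [pow_one, pow_zero, one_mulVec, ← mulVec_mulVec, Bmat_mulVec, mulVec_snoc_zero]
  | succ k ih =>
    rw [pow_succ', ← mulVec_mulVec, ih, ← mulVec_mulVec, Bmat_mulVec, mulVec_snoc_zero,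
      pow_succ', ← mulVec_mulVec]
    rfl

end Shift

section Minors

variable {c : ℕ → ℂ}

lemma det_Qmat (hc1 : c 1 = 1) (s : ℕ) : (Qmat c s).det = 1 := by
  rw [det_of_isLowerTriangular (Qmat c s) fun i j (hij : i < j) => if_neg (by omega)]
  simp [Qmat, hc1]

lemma det_Qmat_submatrix_succ_succAbove (hc1 : c 1 = 1) (i r : ℕ) :
    ((Qmat c (i + r + 1)).submatrix Fin.succ (Fin.succAbove ⟨i, by omega⟩)).det = pm c i := by
  set p : Fin (i + r + 1) := ⟨i, by omega⟩
  have hleft (b : Fin i) : (p.succAbove (Fin.castAdd r b) : ℕ) = b := by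
    rw [Fin.succAbove_of_castSucc_lt _ _ (by simp [p, Fin.lt_def])]; simp
  have hright (b : Fin r) : (p.succAbove (Fin.natAdd i b) : ℕ) = i + b + 1 := by
    rw [Fin.succAbove_of_le_castSucc _ _ (by simp [p, Fin.le_def])]; simp
  rw [← det_submatrix_equiv_self finSumFinEquiv]
  have hblocks : ((Qmat c (i + r + 1)).submatrix Fin.succ p.succAbove).submatrix
      finSumFinEquiv finSumFinEquiv
        = fromBlocks (M0 c i) 0 (of fun (a : Fin r) (b : Fin i) => c (i + a + 2 - b))
            (Qmat c r) := by
    ext (a | a) (b | b) <;>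
      simp only [submatrix_apply, finSumFinEquiv_apply_left, finSumFinEquiv_apply_right,
        fromBlocks_apply₁₁, fromBlocks_apply₁₂, fromBlocks_apply₂₁, fromBlocks_apply₂₂, Qmat, M0,
        Matrix.zero_apply, of_apply, hleft, hright, Fin.val_succ, Fin.val_castAdd, Fin.val_natAdd]
    all_goals
      have := a.isLt; have := b.isLt
      split_ifs <;> first | rfl | omega | (congr 1; omega)
  rw [hblocks, det_fromBlocks_zero₁₂, det_Qmat hc1, mul_one, pm]

end Minors

section FirstColumn

variable {c : ℕ → ℂ}

lemma pm_zero (c : ℕ → ℂ) : pm c 0 = 1 := det_fin_zero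

lemma inv_Qmat_apply_zero (hc1 : c 1 = 1) (t : ℕ) (i : Fin (t + 1)) :
    (Qmat c (t + 1))⁻¹ i 0 = (-1) ^ (i : ℕ) * pm c i := by
  obtain ⟨i, hi⟩ := i
  obtain ⟨r, rfl⟩ : ∃ r, t = i + r := ⟨t - i, by omega⟩
  rw [inv_def, det_Qmat hc1, Ring.inverse_one, one_smul, adjugate_fin_succ_eq_det_submatrix,
    Fin.succAbove_zero, det_Qmat_submatrix_succ_succAbove hc1, Fin.val_zero, zero_add]

lemma Qmat_mulVec_alternating_pm (hc1 : c 1 = 1) (t : ℕ) :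
    Qmat c (t + 1) *ᵥ (fun i : Fin (t + 1) => (-1) ^ (i : ℕ) * pm c i) = Pi.single 0 1 := by
  have hcol : (fun i : Fin (t + 1) => (-1) ^ (i : ℕ) * pm c i)
      = (Qmat c (t + 1))⁻¹ *ᵥ Pi.single 0 1 := by
    ext i
    rw [mulVec_single_one, col_apply, inv_Qmat_apply_zero hc1]
  rw [hcol, mulVec_mulVec, mul_nonsing_inv _ (by rw [det_Qmat hc1]; exact isUnit_one),
    one_mulVec]

lemma Qmat_succ_mulVec_succ (s : ℕ) (z : Fin (s + 1) → ℂ) (i : Fin s) :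
    (Qmat c (s + 1) *ᵥ z) i.succ = c (i + 2) * z 0 + (Qmat c s *ᵥ Fin.tail z) i := by
  simp [mulVec, dotProduct, Fin.sum_univ_succ, Fin.tail, Qmat]

lemma Qmat_succ_mulVec_last (hc1 : c 1 = 1) (s : ℕ) (z : Fin (s + 1) → ℂ) :
    (Qmat c (s + 1) *ᵥ z) (Fin.last s)
      = (fun i : Fin s => c (s + 1 - i)) ⬝ᵥ Fin.init z + z (Fin.last s) := by
  simp [mulVec, dotProduct, Fin.sum_univ_castSucc, Qmat, hc1, Fin.init]

lemma tail_alternating_pm (c : ℕ → ℂ) (s : ℕ) :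
    Fin.tail (fun i : Fin (s + 1) => (-1) ^ (i : ℕ) * pm c i)
      = -fun i : Fin s => (-1) ^ (i : ℕ) * pm c (i + 1) := by
  ext j
  simp [Fin.tail, pow_succ]

lemma inv_Qmat_mulVec (hc1 : c 1 = 1) (s : ℕ) :
    (Qmat c s)⁻¹ *ᵥ (fun i : Fin s => c (i + 2))
      = fun i : Fin s => (-1) ^ (i : ℕ) * pm c (i + 1) := by
  suffices h : Qmat c s *ᵥ (fun i : Fin s => (-1) ^ (i : ℕ) * pm c (i + 1))
      = fun i : Fin s => c (i + 2) by
    rw [← h, mulVec_mulVec, nonsing_inv_mul _ (by rw [det_Qmat hc1]; exact isUnit_one),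
      one_mulVec]
  ext i
  have hrow := congrFun (Qmat_mulVec_alternating_pm hc1 s) i.succ
  rw [Qmat_succ_mulVec_succ, tail_alternating_pm, mulVec_neg, Pi.neg_apply,
    Pi.single_eq_of_ne (Fin.succ_ne_zero _)] at hrow
  simp only [Fin.val_zero, pow_zero, pm_zero, mul_one] at hrow
  linear_combination -hrow

lemma dotProduct_inv_Qmat_mulVec (hc1 : c 1 = 1) (s : ℕ) :
    (fun i : Fin s => c (s + 1 - i)) ⬝ᵥ ((Qmat c s)⁻¹ *ᵥ fun i : Fin s => c (i + 2))
      = c (s + 2) + (-1) ^ (s + 1) * pm c (s + 1) := by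
  have hrow := congrFun (Qmat_mulVec_alternating_pm hc1 (s + 1)) (Fin.last s).succ
  rw [Qmat_succ_mulVec_succ, tail_alternating_pm, mulVec_neg, Pi.neg_apply,
    Qmat_succ_mulVec_last hc1] at hrow
  have hinit : Fin.init (fun i : Fin (s + 1) => (-1) ^ (i : ℕ) * pm c (i + 1))
      = fun i : Fin s => (-1) ^ (i : ℕ) * pm c (i + 1) := rfl
  rw [hinit, Pi.single_eq_of_ne (Fin.succ_ne_zero _)] at hrow
  simp only [Fin.val_zero, Fin.val_last, pow_zero, pm_zero, mul_one] at hrow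
  rw [inv_Qmat_mulVec hc1, pow_succ]
  linear_combination -hrow

end FirstColumn

section Powers

variable {c : ℕ → ℂ}

lemma rev_dotProduct_inv_Qmat_mulVec_eq_iff (hc1 : c 1 = 1) (s : ℕ) :
    (fun i : Fin s => c (s + 1 - i)) ⬝ᵥ ((Qmat c s)⁻¹ *ᵥ fun i : Fin s => c (i + 2))
        = c (s + 2) ↔ pm c (s + 1) = 0 := by
  rw [dotProduct_inv_Qmat_mulVec hc1, add_eq_left, mul_eq_zero]
  simp

lemma rev_dotProduct_inv_Qmat_mul_pow_mulVec (hc1 : c 1 = 1) (t k : ℕ) :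
    (fun i : Fin (t + 1) => c (t + 2 - i)) ⬝ᵥ
        (((Qmat c (t + 1))⁻¹ * (Bmat (t + 1) * (Qmat c (t + 1))⁻¹) ^ (k + 1)) *ᵥ
          fun i : Fin (t + 1) => c (i + 2))
      = yvec c (t + 2) ⬝ᵥ
          ((Pmat t * (Qmat c (t + 1))⁻¹.submatrix Fin.succ Fin.castSucc ^ k) *ᵥ
            yvec c (t + 2)) := by
  set R := (Qmat c (t + 1))⁻¹
  set X := R.submatrix Fin.succ Fin.castSucc
  set v := fun i : Fin (t + 1) => c (i + 2)
  have hw : (fun i : Fin (t + 1) => c (t + 2 - i)) = v ∘ Fin.rev := by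
    ext i
    simp only [v, Function.comp_apply, Fin.val_rev]
    congr 1
    omega
  have hy : Fin.tail (R *ᵥ v) = yvec c (t + 2) := by
    rw [inv_Qmat_mulVec hc1]
    rfl
  calc _ = (v ∘ Fin.rev) ⬝ᵥ ((R * Bmat (t + 1)) ^ (k + 1) *ᵥ (R *ᵥ v)) := by
        rw [hw, ← mul_pow_mul, mulVec_mulVec]
    _ = Fin.init ((v ∘ Fin.rev) ᵥ* R) ⬝ᵥ (X ^ k *ᵥ yvec c (t + 2)) := by
        rw [mul_Bmat_pow_succ_mulVec, hy, dotProduct_mulVec]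
        rfl
    _ = (yvec c (t + 2) ∘ Fin.rev) ⬝ᵥ (X ^ k *ᵥ yvec c (t + 2)) := by
        rw [comp_rev_vecMul_inv_Qmat, init_comp_rev, hy]
    _ = _ := by rw [← mulVec_mulVec, dotProduct_mulVec _ (Pmat t), vecMul_Pmat (s := t)]

end Powers

/-- For every `k ≥ 1`, `w Q⁻¹ (B Q⁻¹)^k v = (ᵗy P) X^(k-1) y`, where `X` is `Q⁻¹` with
the first row and last column deleted; moreover `w Q⁻¹ v = c (n+1)` iff `m n = 0`. -/
theorem stmt11 (n : ℕ) (hn : 3 ≤ n) (c : ℕ → ℂ) (hc1 : c 1 = 1)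
    (X : Matrix (Fin (n - 2)) (Fin (n - 2)) ℂ)
    (hX : ∀ i j : Fin (n - 2),
      X i j = (Qmat c (n - 1))⁻¹ ⟨(i : ℕ) + 1, by have := i.isLt; omega⟩
                                  ⟨(j : ℕ), by have := j.isLt; omega⟩) :
    (∀ k, 1 ≤ k →
      (fun i : Fin (n - 1) => c (n - (i : ℕ))) ⬝ᵥ
        (((Qmat c (n - 1))⁻¹ * (Bmat (n - 1) * (Qmat c (n - 1))⁻¹) ^ k) *ᵥ
          fun i : Fin (n - 1) => c ((i : ℕ) + 2))
      = yvec c n ⬝ᵥ ((Pmat (n - 2) * X ^ (k - 1)) *ᵥ yvec c n)) ∧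
    ((fun i : Fin (n - 1) => c (n - (i : ℕ))) ⬝ᵥ
        ((Qmat c (n - 1))⁻¹ *ᵥ fun i : Fin (n - 1) => c ((i : ℕ) + 2)) = c (n + 1)
      ↔ pm c n = 0) := by
  obtain ⟨t, rfl⟩ : ∃ t, n = t + 2 := ⟨n - 2, by omega⟩
  have hXR : X = (Qmat c (t + 1))⁻¹.submatrix Fin.succ Fin.castSucc := by
    ext i j
    exact hX i j
  refine ⟨fun k hk => ?_, rev_dotProduct_inv_Qmat_mulVec_eq_iff hc1 (t + 1)⟩
  obtain ⟨k, rfl⟩ : ∃ k', k = k' + 1 := ⟨k - 1, by omega⟩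
  rw [hXR]
  exact rev_dotProduct_inv_Qmat_mul_pow_mulVec hc1 t k
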